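/- arXiv:2601.05691 — 7 statements merged into one kernel-verified Lean document; each statement's English description precedes it below -/
import Mathlib

section
/- (χ-coherence) The 2-category Fib_𝒞 is 2-thin: any two 2-cells of Fib_𝒞 with the same source 1-cell and the same target 1-cell are equal. Equivalently, every hom-category of Fib_𝒞 is a preorder; in particular, every 2-cell of Fib_𝒞 between composites 𝐟^* and 𝐠^* of generating 1-cells equals the generating 2-cell χ_(𝐟,𝐠) of the polygon type determined by its boundary. -/
/-! Every formal 2-cell is congruent to the generator `χ` of its own boundary: by induction on
the cell, relations (1), (2), (3.1) and (3.2) absorb identities, vertical composites and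
whiskerings of generators into a single generator. So any two parallel 2-cells of `Fib_C` equal
the same `χ_(𝐟,𝐠)`. -/

open CategoryTheory

universe v u

namespace FibPolygraph

variable {C : Type u} [Category.{v} C]

/-- The value of a path: the composite of its arrows. A path `p : Path A B`
represents the 1-cell `p^* : ℰ_B → ℰ_A` of `Fib_C`. -/
abbrev pathVal {A B : C} (p : Quiver.Path A B) : A ⟶ B :=
  CategoryTheory.composePath p

/-- Formal 2-cells of the free strict 2-category on the pseudofunctorial
signature `Σ*_C`: generating 2-cells `χ_(𝐟,𝐠)` for polygon types,
identities, vertical composition, and whiskering by generating 1-cells on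
either side. -/
inductive Cell2 : ∀ {A B : C}, Quiver.Path A B → Quiver.Path A B → Type (max u v)
  | id : ∀ {A B : C} (p : Quiver.Path A B), Cell2 p p
  | gen : ∀ {A B : C} (p q : Quiver.Path A B), pathVal p = pathVal q → Cell2 p q
  | vcomp : ∀ {A B : C} {p q r : Quiver.Path A B}, Cell2 p q → Cell2 q r → Cell2 p r
  | whiskIn : ∀ {A' A B : C} {p q : Quiver.Path A B} (a : A' ⟶ A),
      Cell2 p q → Cell2 ((a.toPath).comp p) ((a.toPath).comp q)
  | whiskOut : ∀ {A B B' : C} {p q : Quiver.Path A B} (b : B ⟶ B'),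
      Cell2 p q → Cell2 (p.cons b) (q.cons b)

namespace Cell2

/-- Transport a 2-cell along equalities of its boundary 1-cells. -/
def cast {A B : C} {p p' q q' : Quiver.Path A B} (hp : p = p') (hq : q = q')
    (θ : Cell2 p q) : Cell2 p' q' := hp ▸ hq ▸ θ

/-- Whiskering on the codomain side by a composite (path) 1-cell. -/
def whiskOutPath {A B B' : C} (k : Quiver.Path B B') {p q : Quiver.Path A B}
    (θ : Cell2 p q) : Cell2 (p.comp k) (q.comp k) :=
  match k with
  | .nil => θ
  | .cons k' e => whiskOut e (whiskOutPath k' θ)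

/-- Whiskering on the domain side by a composite (path) 1-cell. -/
def whiskInPath : ∀ {A' A B : C} (h : Quiver.Path A' A) {p q : Quiver.Path A B},
    Cell2 p q → Cell2 (h.comp p) (h.comp q)
  | _, _, _, Quiver.Path.nil, p, q, θ =>
      cast (Quiver.Path.nil_comp p).symm (Quiver.Path.nil_comp q).symm θ
  | _, _, _, Quiver.Path.cons h' e, p, q, θ =>
      cast (by rw [← Quiver.Path.comp_assoc]; rfl) (by rw [← Quiver.Path.comp_assoc]; rfl)
        (whiskInPath h' (whiskIn e θ))

end Cell2

/-- The congruence on formal 2-cells generated by the structural laws of a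
(strict) 2-category together with the relations (1), (2), (3.1) and (3.2) of
the presentation of `Fib_C`. -/
inductive Rel : ∀ {A B : C} {p q : Quiver.Path A B}, Cell2 p q → Cell2 p q → Prop
  | refl {A B : C} {p q : Quiver.Path A B} (θ : Cell2 p q) : Rel θ θ
  | symm {A B : C} {p q : Quiver.Path A B} {θ ψ : Cell2 p q} : Rel θ ψ → Rel ψ θ
  | trans {A B : C} {p q : Quiver.Path A B} {θ ψ ξ : Cell2 p q} :
      Rel θ ψ → Rel ψ ξ → Rel θ ξ
  | vcomp_congr {A B : C} {p q r : Quiver.Path A B} {θ θ' : Cell2 p q} {ψ ψ' : Cell2 q r} :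
      Rel θ θ' → Rel ψ ψ' → Rel (θ.vcomp ψ) (θ'.vcomp ψ')
  | whiskIn_congr {A' A B : C} {p q : Quiver.Path A B} (a : A' ⟶ A) {θ θ' : Cell2 p q} :
      Rel θ θ' → Rel (Cell2.whiskIn a θ) (Cell2.whiskIn a θ')
  | whiskOut_congr {A B B' : C} {p q : Quiver.Path A B} (b : B ⟶ B') {θ θ' : Cell2 p q} :
      Rel θ θ' → Rel (Cell2.whiskOut b θ) (Cell2.whiskOut b θ')
  -- hom-categories are categories
  | assoc {A B : C} {p q r s : Quiver.Path A B}
      (θ : Cell2 p q) (ψ : Cell2 q r) (ξ : Cell2 r s) :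
      Rel ((θ.vcomp ψ).vcomp ξ) (θ.vcomp (ψ.vcomp ξ))
  | id_vcomp {A B : C} {p q : Quiver.Path A B} (θ : Cell2 p q) :
      Rel ((Cell2.id p).vcomp θ) θ
  | vcomp_id {A B : C} {p q : Quiver.Path A B} (θ : Cell2 p q) :
      Rel (θ.vcomp (Cell2.id q)) θ
  -- whiskering is functorial
  | whiskIn_id {A' A B : C} (a : A' ⟶ A) (p : Quiver.Path A B) :
      Rel (Cell2.whiskIn a (Cell2.id p)) (Cell2.id ((a.toPath).comp p))
  | whiskOut_id {A B B' : C} (b : B ⟶ B') (p : Quiver.Path A B) :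
      Rel (Cell2.whiskOut b (Cell2.id p)) (Cell2.id (p.cons b))
  | whiskIn_vcomp {A' A B : C} (a : A' ⟶ A) {p q r : Quiver.Path A B}
      (θ : Cell2 p q) (ψ : Cell2 q r) :
      Rel (Cell2.whiskIn a (θ.vcomp ψ))
        ((Cell2.whiskIn a θ).vcomp (Cell2.whiskIn a ψ))
  | whiskOut_vcomp {A B B' : C} (b : B ⟶ B') {p q r : Quiver.Path A B}
      (θ : Cell2 p q) (ψ : Cell2 q r) :
      Rel (Cell2.whiskOut b (θ.vcomp ψ))
        ((Cell2.whiskOut b θ).vcomp (Cell2.whiskOut b ψ))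
  -- whiskerings on the two sides commute
  | whisk_comm {A' A B B' : C} (a : A' ⟶ A) (b : B ⟶ B') {p q : Quiver.Path A B}
      (θ : Cell2 p q) :
      Rel (Cell2.whiskIn a (Cell2.whiskOut b θ))
        (Cell2.whiskOut b (Cell2.whiskIn a θ))
  -- the interchange (exchange) law
  | exchange {A B D : C} {p q : Quiver.Path A B} {r s : Quiver.Path B D}
      (θ : Cell2 p q) (ψ : Cell2 r s) :
      Rel ((Cell2.whiskOutPath r θ).vcomp (Cell2.whiskInPath q ψ))
        ((Cell2.whiskInPath p ψ).vcomp (Cell2.whiskOutPath s θ))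
  -- relation (1): identity
  | rel_id {A B : C} (p : Quiver.Path A B) (h : pathVal p = pathVal p) :
      Rel (Cell2.gen p p h) (Cell2.id p)
  -- relation (2): vertical pasting
  | rel_vcomp {A B : C} (p q r : Quiver.Path A B)
      (h : pathVal p = pathVal q) (h' : pathVal q = pathVal r) :
      Rel ((Cell2.gen p q h).vcomp (Cell2.gen q r h')) (Cell2.gen p r (h.trans h'))
  -- relation (3.1): whiskering on the domain side
  | rel_whiskIn {A' A B : C} (a : A' ⟶ A) (p q : Quiver.Path A B)
      (h : pathVal p = pathVal q) :
      Rel (Cell2.whiskIn a (Cell2.gen p q h))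
        (Cell2.gen ((a.toPath).comp p) ((a.toPath).comp q) (by simp [h]))
  -- relation (3.2): whiskering on the codomain side
  | rel_whiskOut {A B B' : C} (b : B ⟶ B') (p q : Quiver.Path A B)
      (h : pathVal p = pathVal q) :
      Rel (Cell2.whiskOut b (Cell2.gen p q h))
        (Cell2.gen (p.cons b) (q.cons b) (by simp [h]))

instance cellSetoid {A B : C} (p q : Quiver.Path A B) : Setoid (Cell2 p q) :=
  ⟨fun θ ψ => Rel θ ψ, ⟨fun θ => Rel.refl θ, fun h => Rel.symm h, fun h h' => Rel.trans h h'⟩⟩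

/-- The 2-cells of the string-diagrammatic 2-category `Fib_C` from `p^*` to `q^*`:
formal 2-cells modulo the congruence generated by the relations. -/
abbrev Fib2 {A B : C} (p q : Quiver.Path A B) : Type (max u v) :=
  Quotient (cellSetoid p q)

namespace Fib2

/-- The identity 2-cell on `p^*`. -/
def id {A B : C} (p : Quiver.Path A B) : Fib2 p p := ⟦Cell2.id p⟧

/-- The generating 2-cell `χ_(𝐩,𝐪)` of a polygon type `(𝐩,𝐪)`. -/
def gen {A B : C} (p q : Quiver.Path A B) (h : pathVal p = pathVal q) : Fib2 p q :=
  ⟦Cell2.gen p q h⟧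

/-- Vertical composition of 2-cells of `Fib_C`. -/
def vcomp {A B : C} {p q r : Quiver.Path A B} (θ : Fib2 p q) (ψ : Fib2 q r) :
    Fib2 p r :=
  Quotient.liftOn₂ θ ψ (fun a b => (⟦a.vcomp b⟧ : Fib2 p r))
    (fun _ _ _ _ ha hb => Quotient.sound (Rel.vcomp_congr ha hb))

end Fib2

end FibPolygraph

open FibPolygraph

namespace FibPolygraph

variable {C : Type u} [Category.{v} C]

theorem Cell2.pathVal_eq : ∀ {A B : C} {p q : Quiver.Path A B}, Cell2 p q → pathVal p = pathVal q
  | _, _, _, _, .id _ => rfl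
  | _, _, _, _, .gen _ _ h => h
  | _, _, _, _, .vcomp θ ψ => θ.pathVal_eq.trans ψ.pathVal_eq
  | _, _, _, _, .whiskIn _ θ => by simp only [pathVal, composePath_comp, θ.pathVal_eq]
  | _, _, _, _, .whiskOut _ θ => by simp only [pathVal, composePath_cons, θ.pathVal_eq]

theorem Cell2.rel_gen : ∀ {A B : C} {p q : Quiver.Path A B} (θ : Cell2 p q),
    Rel θ (Cell2.gen p q θ.pathVal_eq)
  | _, _, _, _, .id p => .symm (.rel_id p rfl)
  | _, _, _, _, .gen _ _ _ => .refl _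
  | _, _, _, _, .vcomp θ ψ => .trans (.vcomp_congr θ.rel_gen ψ.rel_gen) (.rel_vcomp _ _ _ _ _)
  | _, _, _, _, .whiskIn a θ => .trans (.whiskIn_congr a θ.rel_gen) (.rel_whiskIn a _ _ _)
  | _, _, _, _, .whiskOut b θ => .trans (.whiskOut_congr b θ.rel_gen) (.rel_whiskOut b _ _ _)

namespace Fib2

theorem pathVal_eq {A B : C} {p q : Quiver.Path A B} (θ : Fib2 p q) : pathVal p = pathVal q :=
  Quotient.inductionOn θ Cell2.pathVal_eq

theorem eq_gen {A B : C} {p q : Quiver.Path A B} (h : pathVal p = pathVal q) (θ : Fib2 p q) :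
    θ = gen p q h :=
  Quotient.inductionOn θ fun θ => Quotient.sound θ.rel_gen

instance {A B : C} (p q : Quiver.Path A B) : Subsingleton (Fib2 p q) :=
  ⟨fun θ ψ => (θ.eq_gen θ.pathVal_eq).trans (ψ.eq_gen θ.pathVal_eq).symm⟩

end Fib2

end FibPolygraph

/-- **χ-coherence.** The 2-category `Fib_C` is 2-thin: any two
2-cells with the same source 1-cell and the same target 1-cell are equal
(every hom-category is a preorder); in particular every 2-cell from `𝐟^*` to
`𝐠^*` equals the generating 2-cell `χ_(𝐟,𝐠)` of the polygon type determined by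
its boundary. -/
theorem fib_two_thin {C : Type u} [CategoryTheory.Category.{v} C] :
    (∀ {A B : C} (p q : Quiver.Path A B) (θ ψ : Fib2 p q), θ = ψ) ∧
    (∀ {A B : C} (p q : Quiver.Path A B) (h : pathVal p = pathVal q)
      (θ : Fib2 p q), θ = Fib2.gen p q h) :=
  ⟨fun _ _ _ _ => Subsingleton.elim _ _, fun _ _ h θ => θ.eq_gen h⟩
end

section
/- Let (X, α) be a T_f-algebra. Define φ := f₂^*(α) ∘ (χ₁)_{f_! X} ∘ f₁^*((η_f)_X) : f₁^* X ⟶ f₂^* X and ψ := f₁^*(α) ∘ (χ₁⁻¹)_{f_! X} ∘ f₂^*((η_f)_X) : f₂^* X ⟶ f₁^* X. Then ψ ∘ φ = id_{f₁^* X} and φ ∘ ψ = id_{f₂^* X}; in particular φ is an isomorphism f₁^* X ≅ f₂^* X. -/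
open CategoryTheory

universe v' u' v u

namespace BRPaper

variable (C : Type u) [Category.{v} C] (E : C → Type u') [∀ A, Category.{v'} (E A)]

/-- A cloven bifibration over `C`, modeled as a contravariant pseudofunctor `pull`
(with coherence isomorphisms `ι`, `κ` satisfying the pseudofunctor axioms)
together with chosen left adjoints `push f ⊣ pull f`. -/
structure ClovenBifib where
  pull : ∀ {B A : C}, (B ⟶ A) → (E A ⥤ E B)
  ι : ∀ B : C, 𝟭 (E B) ≅ pull (𝟙 B)
  κ : ∀ {X Y Z : C} (f : Y ⟶ Z) (g : X ⟶ Y), pull f ⋙ pull g ≅ pull (g ≫ f)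
  push : ∀ {B A : C}, (B ⟶ A) → (E B ⥤ E A)
  adj : ∀ {B A : C} (f : B ⟶ A), push f ⊣ pull f
  κ_id_left : ∀ {B A : C} (f : B ⟶ A),
    CategoryTheory.Functor.whiskerLeft (pull f) (ι B).hom ≫ (κ f (𝟙 B)).hom =
      eqToHom (by rw [Category.id_comp, Functor.comp_id])
  κ_id_right : ∀ {B A : C} (g : B ⟶ A),
    CategoryTheory.Functor.whiskerRight (ι A).hom (pull g) ≫ (κ (𝟙 A) g).hom =
      eqToHom (by rw [Category.comp_id, Functor.id_comp])
  κ_assoc : ∀ {X Y Z W : C} (f : Z ⟶ W) (g : Y ⟶ Z) (h : X ⟶ Y),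
    CategoryTheory.Functor.whiskerRight (κ f g).hom (pull h) ≫ (κ (g ≫ f) h).hom =
      CategoryTheory.Functor.whiskerLeft (pull f) (κ g h).hom ≫ (κ f (h ≫ g)).hom ≫
        eqToHom (by rw [Category.assoc])

variable {C E}
variable (P : ClovenBifib C E)

namespace ClovenBifib

/-- The mate of a 2-cell `θ : g^* ∘ e^* ⟶ k^* ∘ h^*`. -/
def mate {A₀ B₀ C₀ D₀ : C} {e : B₀ ⟶ A₀} {g : C₀ ⟶ B₀} {k : C₀ ⟶ D₀} {h : D₀ ⟶ A₀}
    (θ : P.pull e ⋙ P.pull g ⟶ P.pull h ⋙ P.pull k) :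
    P.pull g ⋙ P.push k ⟶ P.push e ⋙ P.pull h :=
  Functor.whiskerRight (P.adj e).unit (P.pull g ⋙ P.push k) ≫
    Functor.whiskerRight (Functor.whiskerLeft (P.push e) θ) (P.push k) ≫
    Functor.whiskerLeft (P.push e ⋙ P.pull h) (P.adj k).counit

/-- The two-fold mate of a 2-cell `θ : g^* ∘ e^* ⟶ k^* ∘ h^*`. -/
def twoMate {A₀ B₀ C₀ D₀ : C} {e : B₀ ⟶ A₀} {g : C₀ ⟶ B₀} {k : C₀ ⟶ D₀} {h : D₀ ⟶ A₀}
    (θ : P.pull e ⋙ P.pull g ⟶ P.pull h ⋙ P.pull k) :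
    P.push k ⋙ P.push h ⟶ P.push g ⋙ P.push e :=
  Functor.whiskerRight (P.adj g).unit (P.push k ⋙ P.push h) ≫
    Functor.whiskerRight (Functor.whiskerLeft (P.push g) (P.mate θ)) (P.push h) ≫
    Functor.whiskerLeft (P.push g ⋙ P.push e) (P.adj h).counit

/-- The Beck–Chevalley transformation of a commutative square `a ≫ d = c ≫ b`. -/
def BC {A₀ B₀ C₀ D₀ : C} (a : A₀ ⟶ B₀) (c : A₀ ⟶ C₀) (d : B₀ ⟶ D₀) (b : C₀ ⟶ D₀)
    (sq : a ≫ d = c ≫ b) :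
    P.pull a ⋙ P.push c ⟶ P.push d ⋙ P.pull b :=
  P.mate ((P.κ d a).hom ≫ eqToHom (by rw [sq]) ≫ (P.κ b c).inv)

/-- The Beck–Chevalley property: the Beck–Chevalley transformation of every
pullback square is an isomorphism. -/
def BCCond : Prop :=
  ∀ ⦃A₀ B₀ C₀ D₀ : C⦄ (a : A₀ ⟶ B₀) (c : A₀ ⟶ C₀) (d : B₀ ⟶ D₀) (b : C₀ ⟶ D₀)
    (sq : a ≫ d = c ≫ b), IsPullback a c d b → IsIso (P.BC a c d b sq)

/-- The inverse (backward) Beck–Chevalley transformation. -/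
noncomputable def BCinv {A₀ B₀ C₀ D₀ : C} (a : A₀ ⟶ B₀) (c : A₀ ⟶ C₀) (d : B₀ ⟶ D₀)
    (b : C₀ ⟶ D₀) (sq : a ≫ d = c ≫ b) (hiso : IsIso (P.BC a c d b sq)) :
    P.push d ⋙ P.pull b ⟶ P.pull a ⋙ P.push c :=
  @CategoryTheory.inv _ _ _ _ (P.BC a c d b sq) hiso

variable {A B : C}

/-- The canonical isomorphism `χ₁ : f₁^* ∘ f^* ≅ f₂^* ∘ f^*` for the kernel pair of `f`. -/
def chi1 (f : B ⟶ A) {BAB : C} (f₁ f₂ : BAB ⟶ B) (hf : f₁ ≫ f = f₂ ≫ f) :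
    P.pull f ⋙ P.pull f₁ ≅ P.pull f ⋙ P.pull f₂ :=
  P.κ f f₁ ≪≫ eqToIso (by rw [hf]) ≪≫ (P.κ f f₂).symm

/-- The canonical isomorphism `d_i : Id ≅ Δ^* ∘ f_i^*`. -/
def dIso {BAB : C} (fi : BAB ⟶ B) (Δ : B ⟶ BAB) (hΔ : Δ ≫ fi = 𝟙 B) :
    𝟭 (E B) ≅ P.pull fi ⋙ P.pull Δ :=
  P.ι B ≪≫ eqToIso (by rw [hΔ]) ≪≫ (P.κ fi Δ).symm

/-- The canonical isomorphism `j_i : π^* ∘ f_i^* ≅ π'^* ∘ f_i^*`. -/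
def jIso {BAB Q : C} (fi : BAB ⟶ B) (π π' : Q ⟶ BAB) (hπ : π ≫ fi = π' ≫ fi) :
    P.pull fi ⋙ P.pull π ≅ P.pull fi ⋙ P.pull π' :=
  P.κ fi π ≪≫ eqToIso (by rw [hπ]) ≪≫ (P.κ fi π').symm

/-- The canonical isomorphism `j : π₂^* ∘ f₂^* ≅ π₁^* ∘ f₁^*`. -/
def jCross {BAB Q : C} (f₁ f₂ : BAB ⟶ B) (π₁ π₂ : Q ⟶ BAB) (hππ : π₂ ≫ f₂ = π₁ ≫ f₁) :
    P.pull f₂ ⋙ P.pull π₂ ≅ P.pull f₁ ⋙ P.pull π₁ :=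
  P.κ f₂ π₂ ≪≫ eqToIso (by rw [hππ]) ≪≫ (P.κ f₁ π₁).symm

/-- Multiplication of the monad `T_f = f^* ∘ f_!`. -/
def Tmul (f : B ⟶ A) (X : E B) :
    (P.pull f).obj ((P.push f).obj ((P.pull f).obj ((P.push f).obj X))) ⟶
      (P.pull f).obj ((P.push f).obj X) :=
  (P.pull f).map ((P.adj f).counit.app ((P.push f).obj X))

/-- `φ := f₂^*(α) ∘ (χ₁)_{f_! X} ∘ f₁^*((η_f)_X)`. -/
def phi (f : B ⟶ A) {BAB : C} (f₁ f₂ : BAB ⟶ B) (hf : f₁ ≫ f = f₂ ≫ f)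
    (X : E B) (α : (P.pull f).obj ((P.push f).obj X) ⟶ X) :
    (P.pull f₁).obj X ⟶ (P.pull f₂).obj X :=
  (P.pull f₁).map ((P.adj f).unit.app X) ≫
    (P.chi1 f f₁ f₂ hf).hom.app ((P.push f).obj X) ≫ (P.pull f₂).map α

/-- `ψ := f₁^*(α) ∘ (χ₁⁻¹)_{f_! X} ∘ f₂^*((η_f)_X)`. -/
def psi (f : B ⟶ A) {BAB : C} (f₁ f₂ : BAB ⟶ B) (hf : f₁ ≫ f = f₂ ≫ f)
    (X : E B) (α : (P.pull f).obj ((P.push f).obj X) ⟶ X) :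
    (P.pull f₂).obj X ⟶ (P.pull f₁).obj X :=
  (P.pull f₂).map ((P.adj f).unit.app X) ≫
    (P.chi1 f f₁ f₂ hf).inv.app ((P.push f).obj X) ≫ (P.pull f₁).map α

/-- `β := (ε_{f₂})_X ∘ (f₂)_!(φ)`. -/
def betaMap {BAB : C} (f₁ f₂ : BAB ⟶ B) (X : E B)
    (φ : (P.pull f₁).obj X ⟶ (P.pull f₂).obj X) :
    (P.push f₂).obj ((P.pull f₁).obj X) ⟶ X :=
  (P.push f₂).map φ ≫ (P.adj f₂).counit.app X

/-- The unit `η'` of the monad `(f₂)_! ∘ f₁^*`. -/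
def eta' {BAB : C} (f₁ f₂ : BAB ⟶ B) (Δ : B ⟶ BAB)
    (hΔ₁ : Δ ≫ f₁ = 𝟙 B) (hΔ₂ : Δ ≫ f₂ = 𝟙 B) (X : E B) :
    X ⟶ (P.push f₂).obj ((P.pull f₁).obj X) :=
  (P.dIso f₁ Δ hΔ₁).hom.app X ≫
    (P.pull Δ).map ((P.adj f₂).unit.app ((P.pull f₁).obj X)) ≫
    (P.dIso f₂ Δ hΔ₂).inv.app ((P.push f₂).obj ((P.pull f₁).obj X))

/-- `k₂ : (f₂)_! ∘ (π₁)_! ⟶ (f₂)_! ∘ π_!`, the two-fold mate of `j₂`. -/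
def kTwo {BAB Q : C} (f₂ : BAB ⟶ B) (π π₁ : Q ⟶ BAB) (hπ₂ : π ≫ f₂ = π₁ ≫ f₂) :
    P.push π₁ ⋙ P.push f₂ ⟶ P.push π ⋙ P.push f₂ :=
  P.twoMate (P.jIso f₂ π π₁ hπ₂).hom

/-- The multiplication `μ'` of the monad `(f₂)_! ∘ f₁^*`. -/
noncomputable def mu' {BAB Q : C} (f₁ f₂ : BAB ⟶ B) (π₁ π₂ π : Q ⟶ BAB)
    (hππ : π₂ ≫ f₂ = π₁ ≫ f₁) (hπ₁ : π ≫ f₁ = π₂ ≫ f₁) (hπ₂ : π ≫ f₂ = π₁ ≫ f₂)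
    (hiso : IsIso (P.BC π₂ π₁ f₂ f₁ hππ)) (X : E B) :
    (P.push f₂).obj ((P.pull f₁).obj ((P.push f₂).obj ((P.pull f₁).obj X))) ⟶
      (P.push f₂).obj ((P.pull f₁).obj X) :=
  (P.push f₂).map ((P.BCinv π₂ π₁ f₂ f₁ hππ hiso).app ((P.pull f₁).obj X)) ≫
    (P.push f₂).map ((P.push π₁).map ((P.jIso f₁ π π₂ hπ₁).inv.app X)) ≫
    (P.kTwo f₂ π π₁ hπ₂).app ((P.pull π).obj ((P.pull f₁).obj X)) ≫
    (P.push f₂).map ((P.adj π).counit.app ((P.pull f₁).obj X))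

end ClovenBifib

end BRPaper

/-!
This is a general fact about adjunctions: for any adjunction `L ⊣ R`, any natural isomorphism
`χ : R ⋙ G₁ ≅ R ⋙ G₂` and any algebra `α` of the monad `R ∘ L`, the maps
`G₁(η) ≫ χ ≫ G₂(α)` built from `χ` and from `χ⁻¹` are mutually inverse;
`φ` and `ψ` are the case `R = f^*`, `Gᵢ = fᵢ^*`, `χ = χ₁`.
The point is that `χ⁻¹ ≫ G₁(α)` absorbs `G₂(α ≫ η)`: by naturality of `η`, `α ≫ η = η ≫ RL(α)`;
moving `RL(α)` across `χ⁻¹` and using the associativity law of `α` turns it into `R(ε)`,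
which cancels against `η` by the triangle identity.
-/

namespace CategoryTheory.Adjunction

variable {D D' 𝒳 : Type*} [Category D] [Category D'] [Category 𝒳] {L : D ⥤ D'} {R : D' ⥤ D}
  (adj : L ⊣ R) {G₁ G₂ : D ⥤ 𝒳}

def algebraTransport (χ : R ⋙ G₁ ≅ R ⋙ G₂) {X : D} (α : R.obj (L.obj X) ⟶ X) :
    G₁.obj X ⟶ G₂.obj X :=
  G₁.map (adj.unit.app X) ≫ χ.hom.app (L.obj X) ≫ G₂.map α

theorem algebraTransport_comp_symm (χ : R ⋙ G₁ ≅ R ⋙ G₂) {X : D} {α : R.obj (L.obj X) ⟶ X}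
    (hα₁ : adj.unit.app X ≫ α = 𝟙 X)
    (hα₂ : R.map (adj.counit.app (L.obj X)) ≫ α = R.map (L.map α) ≫ α) :
    adj.algebraTransport χ α ≫ adj.algebraTransport χ.symm α = 𝟙 (G₁.obj X) := by
  have χ_inv_naturality {Y Y' : D'} (g : Y ⟶ Y') :
      G₂.map (R.map g) ≫ χ.inv.app Y' = χ.inv.app Y ≫ G₁.map (R.map g) :=
    χ.inv.naturality g
  have unit_naturality : α ≫ adj.unit.app X = adj.unit.app _ ≫ R.map (L.map α) :=
    adj.unit.naturality α
  have triangle : adj.unit.app (R.obj (L.obj X)) ≫ R.map (adj.counit.app (L.obj X)) = 𝟙 _ :=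
    adj.right_triangle_components _
  have absorb : G₂.map (α ≫ adj.unit.app X) ≫ χ.inv.app (L.obj X) ≫ G₁.map α =
      χ.inv.app (L.obj X) ≫ G₁.map α :=
    calc _ = G₂.map (adj.unit.app _) ≫ χ.inv.app _ ≫ G₁.map (R.map (L.map α) ≫ α) := by
          rw [G₁.map_comp, ← reassoc_of% χ_inv_naturality, ← G₂.map_comp_assoc,
            unit_naturality]
      _ = G₂.map (adj.unit.app _) ≫ χ.inv.app _ ≫ G₁.map (R.map (adj.counit.app _) ≫ α) := by
          rw [hα₂]
      _ = G₂.map (adj.unit.app _ ≫ R.map (adj.counit.app _)) ≫ χ.inv.app _ ≫ G₁.map α := by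
          rw [G₁.map_comp, ← reassoc_of% χ_inv_naturality, G₂.map_comp, Category.assoc]
      _ = _ := by rw [triangle, G₂.map_id, Category.id_comp]; rfl
  calc _ = G₁.map (adj.unit.app X) ≫ χ.hom.app _ ≫
        (G₂.map (α ≫ adj.unit.app X) ≫ χ.inv.app (L.obj X) ≫ G₁.map α) := by
        simp only [algebraTransport, Iso.symm_hom, G₂.map_comp, Category.assoc]
    _ = G₁.map (adj.unit.app X ≫ α) := by rw [absorb, Iso.hom_inv_id_app_assoc, G₁.map_comp]
    _ = 𝟙 _ := by rw [hα₁]; exact G₁.map_id X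

end CategoryTheory.Adjunction

open BRPaper ClovenBifib CategoryTheory

theorem benabou_roubaud_phi_isIso_general
    {C : Type u} [Category.{v} C]
    {E : C → Type u'} [∀ A, Category.{v'} (E A)] (P : ClovenBifib C E)
    {A B : C} (f : B ⟶ A) {BAB : C} (f₁ f₂ : BAB ⟶ B)
    (hf : f₁ ≫ f = f₂ ≫ f)
    (X : E B) (α : (P.pull f).obj ((P.push f).obj X) ⟶ X)
    (hTA1 : (P.adj f).unit.app X ≫ α = 𝟙 X)
    (hTA2 : P.Tmul f X ≫ α = (P.pull f).map ((P.push f).map α) ≫ α) :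
    P.phi f f₁ f₂ hf X α ≫ P.psi f f₁ f₂ hf X α = 𝟙 ((P.pull f₁).obj X) ∧
    P.psi f f₁ f₂ hf X α ≫ P.phi f f₁ f₂ hf X α = 𝟙 ((P.pull f₂).obj X) ∧
    IsIso (P.phi f f₁ f₂ hf X α) := by
  have hφψ : P.phi f f₁ f₂ hf X α ≫ P.psi f f₁ f₂ hf X α = 𝟙 _ :=
    (P.adj f).algebraTransport_comp_symm (P.chi1 f f₁ f₂ hf) hTA1 hTA2
  have hψφ : P.psi f f₁ f₂ hf X α ≫ P.phi f f₁ f₂ hf X α = 𝟙 _ :=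
    (P.adj f).algebraTransport_comp_symm (P.chi1 f f₁ f₂ hf).symm hTA1 hTA2
  exact ⟨hφψ, hψφ, ⟨_, hφψ, hψφ⟩⟩

/-- For a `T_f`-algebra `(X, α)`, the morphisms
`φ := f₂^*(α) ∘ (χ₁)_{f_! X} ∘ f₁^*((η_f)_X)` and
`ψ := f₁^*(α) ∘ (χ₁⁻¹)_{f_! X} ∘ f₂^*((η_f)_X)` are mutually inverse;
in particular `φ` is an isomorphism. -/
theorem benabou_roubaud_phi_isIso
    {C : Type u} [Category.{v} C] [Limits.HasPullbacks C]
    {E : C → Type u'} [∀ A, Category.{v'} (E A)] (P : ClovenBifib C E)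
    {A B : C} (f : B ⟶ A) {BAB : C} (f₁ f₂ : BAB ⟶ B)
    (hf : f₁ ≫ f = f₂ ≫ f) (hkp : IsPullback f₁ f₂ f f)
    (X : E B) (α : (P.pull f).obj ((P.push f).obj X) ⟶ X)
    (hTA1 : (P.adj f).unit.app X ≫ α = 𝟙 X)
    (hTA2 : P.Tmul f X ≫ α = (P.pull f).map ((P.push f).map α) ≫ α) :
    P.phi f f₁ f₂ hf X α ≫ P.psi f f₁ f₂ hf X α = 𝟙 ((P.pull f₁).obj X) ∧
    P.psi f f₁ f₂ hf X α ≫ P.phi f f₁ f₂ hf X α = 𝟙 ((P.pull f₂).obj X) ∧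
    IsIso (P.phi f f₁ f₂ hf X α) :=
  benabou_roubaud_phi_isIso_general P f f₁ f₂ hf X α hTA1 hTA2
end

section
/- Let (X, α) be a T_f-algebra and let φ := f₂^*(α) ∘ (χ₁)_{f_! X} ∘ f₁^*((η_f)_X) : f₁^* X ⟶ f₂^* X. Then φ satisfies the first descent condition (DD1): Δ^*(φ) ∘ (d₁)_X = (d₂)_X. -/
open CategoryTheory

universe v' u' v u

/-! Naturality of `d₁` moves the unit `f₁^*(η)` in front of `d₁`, and naturality of `d₂` moves
`f₂^*(α)` behind `d₂`, so that the unit law `α ∘ η = id` finishes the proof once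
`Δ^*(χ₁) ∘ d₁ = d₂` is known on objects `f^* Z`. That identity is pure pseudofunctor coherence:
composed with `Δ^* f₂^* f^* ≅ (Δ ≫ f₂ ≫ f)^*`, both sides become the canonical identification
of `f^*` with `(Δ ≫ f_i ≫ f)^* = f^*`. -/

namespace BRPaper.ClovenBifib

variable {C : Type u} [Category.{v} C] {E : C → Type u'} [∀ A, Category.{v'} (E A)]
variable (P : ClovenBifib C E)

lemma κ_assoc_app {X Y Z W : C} (f : Z ⟶ W) (g : Y ⟶ Z) (h : X ⟶ Y) (V : E W) :
    (P.pull h).map ((P.κ f g).hom.app V) ≫ (P.κ (g ≫ f) h).hom.app V =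
      (P.κ g h).hom.app ((P.pull f).obj V) ≫ (P.κ f (h ≫ g)).hom.app V ≫
        eqToHom (by rw [Category.assoc]) := by
  simpa [eqToHom_app] using congr_app (P.κ_assoc f g h) V

lemma κ_id_left_app {B A : C} (f : B ⟶ A) (V : E A) :
    (P.ι B).hom.app ((P.pull f).obj V) ≫ (P.κ f (𝟙 B)).hom.app V =
      eqToHom (by rw [Category.id_comp]; rfl) := by
  simpa [eqToHom_app] using congr_app (P.κ_id_left f) V

lemma eqToHom_comp_κ_hom_app {X Y Z : C} (f : Y ⟶ Z) {g g' : X ⟶ Y} (hg : g = g') (V : E Z) :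
    eqToHom (by rw [hg]) ≫ (P.κ f g').hom.app V = (P.κ f g).hom.app V ≫ eqToHom (by rw [hg]) := by
  subst hg; simp

lemma map_eqToHom_comp_κ_hom_app {X Y Z : C} {f f' : Y ⟶ Z} (hf : f = f') (g : X ⟶ Y)
    (V : E Z) :
    (P.pull g).map (eqToHom (by rw [hf])) ≫ (P.κ f' g).hom.app V =
      (P.κ f g).hom.app V ≫ eqToHom (by rw [hf]) := by
  subst hf; simp

lemma dIso_hom_app_comp_κ {A B BAB : C} (f : B ⟶ A) (fi : BAB ⟶ B) (Δ : B ⟶ BAB)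
    (hΔ : Δ ≫ fi = 𝟙 B) (Z : E A) :
    (P.dIso fi Δ hΔ).hom.app ((P.pull f).obj Z) ≫ (P.pull Δ).map ((P.κ f fi).hom.app Z) ≫
        (P.κ (fi ≫ f) Δ).hom.app Z =
      eqToHom (by rw [← Category.assoc, hΔ, Category.id_comp]; rfl) := by
  simp only [dIso, Iso.trans_hom, Iso.symm_hom, eqToIso.hom, NatTrans.comp_app, eqToHom_app,
    Category.assoc, κ_assoc_app, Iso.inv_hom_id_app_assoc]
  rw [reassoc_of% (P.eqToHom_comp_κ_hom_app f hΔ.symm Z), reassoc_of% (P.κ_id_left_app f Z),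
    eqToHom_trans, eqToHom_trans]

lemma dIso_hom_app_comp_map_chi1 {A B BAB : C} (f : B ⟶ A) (f₁ f₂ : BAB ⟶ B)
    (hf : f₁ ≫ f = f₂ ≫ f) (Δ : B ⟶ BAB) (hΔ₁ : Δ ≫ f₁ = 𝟙 B) (hΔ₂ : Δ ≫ f₂ = 𝟙 B)
    (Z : E A) :
    (P.dIso f₁ Δ hΔ₁).hom.app ((P.pull f).obj Z) ≫
        (P.pull Δ).map ((P.chi1 f f₁ f₂ hf).hom.app Z) =
      (P.dIso f₂ Δ hΔ₂).hom.app ((P.pull f).obj Z) := by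
  rw [← cancel_mono ((P.pull Δ).map ((P.κ f f₂).hom.app Z) ≫ (P.κ (f₂ ≫ f) Δ).hom.app Z),
    dIso_hom_app_comp_κ]
  simp only [chi1, Iso.trans_hom, Iso.symm_hom, eqToIso.hom, NatTrans.comp_app, eqToHom_app,
    Functor.map_comp, Category.assoc]
  rw [← Functor.map_comp_assoc (P.pull Δ) ((P.κ f f₂).inv.app Z), Iso.inv_hom_id_app,
    CategoryTheory.Functor.map_id, Category.id_comp, map_eqToHom_comp_κ_hom_app P hf,
    reassoc_of% (P.dIso_hom_app_comp_κ f f₁ Δ hΔ₁ Z), eqToHom_trans]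

end BRPaper.ClovenBifib

open BRPaper ClovenBifib CategoryTheory

theorem benabou_roubaud_phi_DD1_general
    {C : Type u} [Category.{v} C]
    {E : C → Type u'} [∀ A, Category.{v'} (E A)] (P : ClovenBifib C E)
    {A B : C} (f : B ⟶ A) {BAB : C} (f₁ f₂ : BAB ⟶ B)
    (hf : f₁ ≫ f = f₂ ≫ f)
    (Δ : B ⟶ BAB) (hΔ₁ : Δ ≫ f₁ = 𝟙 B) (hΔ₂ : Δ ≫ f₂ = 𝟙 B)
    (X : E B) (α : (P.pull f).obj ((P.push f).obj X) ⟶ X)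
    (hTA1 : (P.adj f).unit.app X ≫ α = 𝟙 X) :
    (P.dIso f₁ Δ hΔ₁).hom.app X ≫ (P.pull Δ).map (P.phi f f₁ f₂ hf X α) =
      (P.dIso f₂ Δ hΔ₂).hom.app X := by
  have d₁_natural : (P.dIso f₁ Δ hΔ₁).hom.app X ≫ (P.pull Δ).map ((P.pull f₁).map
      ((P.adj f).unit.app X)) = (P.adj f).unit.app X ≫ (P.dIso f₁ Δ hΔ₁).hom.app _ :=
    ((P.dIso f₁ Δ hΔ₁).hom.naturality _).symm
  have d₂_natural : (P.dIso f₂ Δ hΔ₂).hom.app _ ≫ (P.pull Δ).map ((P.pull f₂).map α) =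
      α ≫ (P.dIso f₂ Δ hΔ₂).hom.app X :=
    ((P.dIso f₂ Δ hΔ₂).hom.naturality α).symm
  rw [phi, Functor.map_comp, Functor.map_comp, reassoc_of% d₁_natural,
    reassoc_of% (P.dIso_hom_app_comp_map_chi1 f f₁ f₂ hf Δ hΔ₁ hΔ₂), d₂_natural,
    reassoc_of% hTA1]

/-- For a `T_f`-algebra `(X, α)`, the morphism
`φ := f₂^*(α) ∘ (χ₁)_{f_! X} ∘ f₁^*((η_f)_X)` satisfies the first descent
condition (DD1): `Δ^*(φ) ∘ (d₁)_X = (d₂)_X`. -/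
theorem benabou_roubaud_phi_DD1
    {C : Type u} [Category.{v} C] [Limits.HasPullbacks C]
    {E : C → Type u'} [∀ A, Category.{v'} (E A)] (P : ClovenBifib C E)
    {A B : C} (f : B ⟶ A) {BAB : C} (f₁ f₂ : BAB ⟶ B)
    (hf : f₁ ≫ f = f₂ ≫ f) (hkp : IsPullback f₁ f₂ f f)
    (Δ : B ⟶ BAB) (hΔ₁ : Δ ≫ f₁ = 𝟙 B) (hΔ₂ : Δ ≫ f₂ = 𝟙 B)
    (X : E B) (α : (P.pull f).obj ((P.push f).obj X) ⟶ X)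
    (hTA1 : (P.adj f).unit.app X ≫ α = 𝟙 X)
    (hTA2 : P.Tmul f X ≫ α = (P.pull f).map ((P.push f).map α) ≫ α) :
    (P.dIso f₁ Δ hΔ₁).hom.app X ≫ (P.pull Δ).map (P.phi f f₁ f₂ hf X α) =
      (P.dIso f₂ Δ hΔ₂).hom.app X :=
  benabou_roubaud_phi_DD1_general P f f₁ f₂ hf Δ hΔ₁ hΔ₂ X α hTA1
end

section
/- Let (X, φ) be an object of Desc_p(f) (so φ : f₁^* X ≅ f₂^* X satisfies (DD1) and (DD2)). Define β := (ε_{f₂})_X ∘ (f₂)_!(φ) : (f₂)_!(f₁^* X) ⟶ X. Then β satisfies the unit action axiom (AC1): β ∘ η'_X = id_X. -/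
open CategoryTheory

universe v' u' v u

open BRPaper ClovenBifib CategoryTheory

/-! `β` is the transpose of `φ` under `(f₂)_! ⊣ f₂^*`, and precomposing any map with `η'_X`
transposes it back and restricts along `Δ`. Hence `β ∘ η'_X = d₂⁻¹ ∘ Δ^*(φ) ∘ d₁`, which is the
identity by (DD1). -/

namespace BRPaper.ClovenBifib

variable {C : Type u} [Category.{v} C] {E : C → Type u'} [∀ A, Category.{v'} (E A)]
  (P : ClovenBifib C E) {B BAB : C} (f₁ f₂ : BAB ⟶ B)

theorem betaMap_eq_homEquiv_symm (X : E B) (φ : (P.pull f₁).obj X ⟶ (P.pull f₂).obj X) :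
    P.betaMap f₁ f₂ X φ = ((P.adj f₂).homEquiv _ X).symm φ :=
  ((P.adj f₂).homEquiv_counit (g := φ)).symm

theorem homEquiv_betaMap (X : E B) (φ : (P.pull f₁).obj X ⟶ (P.pull f₂).obj X) :
    (P.adj f₂).homEquiv _ X (P.betaMap f₁ f₂ X φ) = φ := by
  rw [betaMap_eq_homEquiv_symm, Equiv.apply_symm_apply]

theorem eta'_comp {Δ : B ⟶ BAB} (hΔ₁ : Δ ≫ f₁ = 𝟙 B) (hΔ₂ : Δ ≫ f₂ = 𝟙 B) (X Y : E B)
    (g : (P.push f₂).obj ((P.pull f₁).obj X) ⟶ Y) :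
    P.eta' f₁ f₂ Δ hΔ₁ hΔ₂ X ≫ g =
      (P.dIso f₁ Δ hΔ₁).hom.app X ≫ (P.pull Δ).map ((P.adj f₂).homEquiv _ Y g) ≫
        (P.dIso f₂ Δ hΔ₂).inv.app Y := by
  have hd₂ := (P.dIso f₂ Δ hΔ₂).inv.naturality g
  simp only [Functor.id_map, Functor.comp_map] at hd₂
  simp only [eta', Adjunction.homEquiv_unit, Functor.map_comp, Category.assoc, hd₂]

end BRPaper.ClovenBifib

theorem benabou_roubaud_beta_AC1_general
    {C : Type u} [Category.{v} C]
    {E : C → Type u'} [∀ A, Category.{v'} (E A)] (P : ClovenBifib C E)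
    {A B : C} {BAB : C} (f₁ f₂ : BAB ⟶ B)
    (Δ : B ⟶ BAB) (hΔ₁ : Δ ≫ f₁ = 𝟙 B) (hΔ₂ : Δ ≫ f₂ = 𝟙 B)
    (X : E B) (φ : (P.pull f₁).obj X ≅ (P.pull f₂).obj X)
    (hDD1 : (P.dIso f₁ Δ hΔ₁).hom.app X ≫ (P.pull Δ).map φ.hom =
      (P.dIso f₂ Δ hΔ₂).hom.app X) :
    P.eta' f₁ f₂ Δ hΔ₁ hΔ₂ X ≫ P.betaMap f₁ f₂ X φ.hom = 𝟙 X := by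
  rw [eta'_comp, homEquiv_betaMap, ← Category.assoc, hDD1, Iso.hom_inv_id_app]
  rfl

/-- If `(X, φ)` is an object of `Desc_p(f)`, then
`β := (ε_{f₂})_X ∘ (f₂)_!(φ)` satisfies the unit action axiom (AC1):
`β ∘ η'_X = id_X`. -/
theorem benabou_roubaud_beta_AC1
    {C : Type u} [Category.{v} C] [Limits.HasPullbacks C]
    {E : C → Type u'} [∀ A, Category.{v'} (E A)] (P : ClovenBifib C E)
    {A B : C} (f : B ⟶ A) {BAB : C} (f₁ f₂ : BAB ⟶ B)
    (hf : f₁ ≫ f = f₂ ≫ f) (hkp : IsPullback f₁ f₂ f f)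
    (Δ : B ⟶ BAB) (hΔ₁ : Δ ≫ f₁ = 𝟙 B) (hΔ₂ : Δ ≫ f₂ = 𝟙 B)
    {Q : C} (π₁ π₂ : Q ⟶ BAB) (hππ : π₂ ≫ f₂ = π₁ ≫ f₁) (hpbQ : IsPullback π₂ π₁ f₂ f₁)
    (π : Q ⟶ BAB) (hπ₁ : π ≫ f₁ = π₂ ≫ f₁) (hπ₂ : π ≫ f₂ = π₁ ≫ f₂)
    (X : E B) (φ : (P.pull f₁).obj X ≅ (P.pull f₂).obj X)
    (hDD1 : (P.dIso f₁ Δ hΔ₁).hom.app X ≫ (P.pull Δ).map φ.hom =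
      (P.dIso f₂ Δ hΔ₂).hom.app X)
    (hDD2 : (P.pull π₂).map φ.hom ≫ (P.jCross f₁ f₂ π₁ π₂ hππ).hom.app X ≫
        (P.pull π₁).map φ.hom =
      (P.jIso f₁ π π₂ hπ₁).inv.app X ≫ (P.pull π).map φ.hom ≫
        (P.jIso f₂ π π₁ hπ₂).hom.app X) :
    P.eta' f₁ f₂ Δ hΔ₁ hΔ₂ X ≫ P.betaMap f₁ f₂ X φ.hom = 𝟙 X :=
  benabou_roubaud_beta_AC1_general P (A := A) f₁ f₂ Δ hΔ₁ hΔ₂ X φ hDD1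
end

section
/- Assume the Beck–Chevalley property. Then the endofunctor (f₂)_! ∘ f₁^* of ℰ_B, equipped with unit η′ and multiplication μ′, is a monad on ℰ_B (it satisfies the two unit laws and the associativity law of a monad); moreover BC₁ : (f₂)_! ∘ f₁^* ⟶ f^* ∘ f_! is an isomorphism of monads from ((f₂)_! ∘ f₁^*, η′, μ′) to T_f, i.e., BC₁ ∘ η′ = η_f and BC₁ ∘ μ′ = μ ∘ (BC₁ ∗ BC₁), where BC₁ ∗ BC₁ is the horizontal composite of BC₁ with itself and μ is the multiplication of T_f. -/
open CategoryTheory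

universe v' u' v u

/-!
`BC₁` is invertible and carries `η′` to `η_f` and `μ′` to `μ ∘ (BC₁ ∗ BC₁)`, so
`((f₂)_! ∘ f₁^*, η′, μ′)` is the transport of the monad `T_f` along `BC₁⁻¹` and inherits the
monad laws. The two compatibilities are checked after transposing along `(f₂)_! ⊣ f₂^*` (and,
for `μ′`, also along `(π₁)_! ⊣ π₁^*`): the transposes of Beck–Chevalley maps and of (two-fold)
mates are explicit, and what is left are identities between structural isomorphisms of the
pseudofunctor. These hold because at an object of the form `u^* W` each structural isomorphism is
conjugate to an `eqToHom` between canonical isomorphisms `p^* g^* u^* W ≅ (p ≫ g ≫ u)^* W`.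
-/

namespace CategoryTheory.Monad

variable {D : Type*} [Category D]

lemma laws_of_isIso (T : Monad D) {F : D ⥤ D} (φ : F ⟶ T.toFunctor) [hφ : IsIso φ]
    (η' : ∀ X, X ⟶ F.obj X) (μ' : ∀ X, F.obj (F.obj X) ⟶ F.obj X)
    (hη : ∀ X, η' X ≫ φ.app X = T.η.app X)
    (hμ : ∀ X, μ' X ≫ φ.app X = (φ.app (F.obj X) ≫ T.map (φ.app X)) ≫ T.μ.app X) :
    (∀ X, η' (F.obj X) ≫ μ' X = 𝟙 _) ∧ (∀ X, F.map (η' X) ≫ μ' X = 𝟙 _) ∧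
      ∀ X, F.map (μ' X) ≫ μ' X = μ' (F.obj X) ≫ μ' X := by
  let T' := T.transport (asIso φ).symm
  have hη' : ∀ X, η' X = T'.η.app X := fun X => by
    simp [T', transport, ← hη]
  have hμ' : ∀ X, μ' X = T'.μ.app X := fun X => by
    simp [T', transport, ← reassoc_of% hμ]
  simp only [hη', hμ']
  exact ⟨T'.left_unit, T'.right_unit, T'.assoc⟩

end CategoryTheory.Monad

namespace BRPaper.ClovenBifib

variable {C : Type u} [Category.{v} C] {E : C → Type u'} [∀ A, Category.{v'} (E A)]
  (P : ClovenBifib C E)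

section Coherence

lemma κ_hom_app_congr {X Y Z : C} {g g' : Y ⟶ Z} (hg : g = g') {p p' : X ⟶ Y} (hp : p = p')
    (W : E Z) :
    (P.κ g p).hom.app W =
      eqToHom (by rw [hg, hp]) ≫ (P.κ g' p').hom.app W ≫ eqToHom (by rw [hg, hp]) := by
  subst hg hp
  simp

def pull₃Iso {Q₀ Z Y A₀ : C} (p : Q₀ ⟶ Z) (g : Z ⟶ Y) (u : Y ⟶ A₀) (W : E A₀) :
    (P.pull p).obj ((P.pull g).obj ((P.pull u).obj W)) ≅ (P.pull (p ≫ g ≫ u)).obj W :=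
  (P.pull p).mapIso ((P.κ u g).app W) ≪≫ (P.κ (g ≫ u) p).app W

variable {Q₀ Z Y A₀ : C}

lemma κ_hom_app_pull (p : Q₀ ⟶ Z) (g : Z ⟶ Y) (u : Y ⟶ A₀) (W : E A₀) :
    (P.κ g p).hom.app ((P.pull u).obj W) =
      (P.pull₃Iso p g u W).hom ≫ eqToHom (by rw [Category.assoc]) ≫
        (P.κ u (p ≫ g)).inv.app W := by
  have h := congrArg (fun α => α.app W) (P.κ_assoc u g p)
  simp only [NatTrans.comp_app, Functor.whiskerRight_app, Functor.whiskerLeft_app,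
    eqToHom_app] at h
  simp only [pull₃Iso, Iso.trans_hom, Functor.mapIso_hom, Iso.app_hom, Category.assoc]
  rw [← Category.assoc, h]
  simp

lemma κ_inv_app_pull (p : Q₀ ⟶ Z) (g : Z ⟶ Y) (u : Y ⟶ A₀) (W : E A₀) :
    (P.κ g p).inv.app ((P.pull u).obj W) =
      (P.κ u (p ≫ g)).hom.app W ≫ eqToHom (by rw [Category.assoc]) ≫
        (P.pull₃Iso p g u W).inv := by
  rw [← cancel_epi ((P.κ g p).hom.app ((P.pull u).obj W)), Iso.hom_inv_id_app,
    P.κ_hom_app_pull p g u W]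
  simp

lemma κ_hom_comp_eqToHom_comp_κ_inv_app_pull (p p' : Q₀ ⟶ Z) (g g' : Z ⟶ Y) (u : Y ⟶ A₀)
    (h : p ≫ g = p' ≫ g') (W : E A₀) :
    (P.κ g p).hom.app ((P.pull u).obj W) ≫ eqToHom (by rw [h]) ≫
        (P.κ g' p').inv.app ((P.pull u).obj W) =
      (P.pull₃Iso p g u W).hom ≫ eqToHom (by rw [← Category.assoc, h, Category.assoc]) ≫
        (P.pull₃Iso p' g' u W).inv := by
  have hκ : (P.κ u (p ≫ g)).inv.app W =
      eqToHom (by rw [h]) ≫ (P.κ u (p' ≫ g')).inv.app W ≫ eqToHom (by rw [h]) := by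
    rw [← cancel_epi ((P.κ u (p ≫ g)).hom.app W), Iso.hom_inv_id_app,
      P.κ_hom_app_congr rfl h W]
    simp
  rw [P.κ_hom_app_pull p g u W, P.κ_inv_app_pull p' g' u W, hκ]
  simp

lemma pull_map_κ_hom_comp_eqToHom_comp_κ_inv_app (p : Q₀ ⟶ Z) (g g' : Z ⟶ Y) (u : Y ⟶ A₀)
    (h : g ≫ u = g' ≫ u) (W : E A₀) :
    (P.pull p).map ((P.κ u g).hom.app W ≫ eqToHom (by rw [h]) ≫ (P.κ u g').inv.app W) =
      (P.pull₃Iso p g u W).hom ≫ eqToHom (by rw [h]) ≫ (P.pull₃Iso p g' u W).inv := by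
  simp only [Functor.map_comp, eqToHom_map, pull₃Iso, Iso.trans_hom, Iso.trans_inv,
    Functor.mapIso_hom, Functor.mapIso_inv, Iso.app_hom, Iso.app_inv, Category.assoc]
  rw [P.κ_hom_app_congr h rfl W]
  simp

variable {A B BAB : C}

lemma pull_map_chi1_hom_app (f : B ⟶ A) (f₁ f₂ : BAB ⟶ B) (hf : f₁ ≫ f = f₂ ≫ f)
    (p : Q₀ ⟶ BAB) (W : E A) :
    (P.pull p).map ((P.chi1 f f₁ f₂ hf).hom.app W) =
      (P.pull₃Iso p f₁ f W).hom ≫ eqToHom (by rw [hf]) ≫ (P.pull₃Iso p f₂ f W).inv := by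
  simpa [chi1] using P.pull_map_κ_hom_comp_eqToHom_comp_κ_inv_app p f₁ f₂ f hf W

lemma jIso_hom_app_pull (fi : BAB ⟶ B) (ρ ρ' : Q₀ ⟶ BAB) (hρ : ρ ≫ fi = ρ' ≫ fi)
    (f : B ⟶ A) (W : E A) :
    (P.jIso fi ρ ρ' hρ).hom.app ((P.pull f).obj W) =
      (P.pull₃Iso ρ fi f W).hom ≫ eqToHom (by rw [← Category.assoc, hρ, Category.assoc]) ≫
        (P.pull₃Iso ρ' fi f W).inv := by
  simpa [jIso] using P.κ_hom_comp_eqToHom_comp_κ_inv_app_pull ρ ρ' fi fi f hρ W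

lemma jIso_inv_app_pull (fi : BAB ⟶ B) (ρ ρ' : Q₀ ⟶ BAB) (hρ : ρ ≫ fi = ρ' ≫ fi)
    (f : B ⟶ A) (W : E A) :
    (P.jIso fi ρ ρ' hρ).inv.app ((P.pull f).obj W) =
      (P.pull₃Iso ρ' fi f W).hom ≫ eqToHom (by rw [← Category.assoc, ← hρ, Category.assoc]) ≫
        (P.pull₃Iso ρ fi f W).inv := by
  simpa [jIso] using P.κ_hom_comp_eqToHom_comp_κ_inv_app_pull ρ' ρ fi fi f hρ.symm W

lemma dIso_hom_app_pull (fi : BAB ⟶ B) (Δ : B ⟶ BAB) (hΔ : Δ ≫ fi = 𝟙 B) (f : B ⟶ A)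
    (W : E A) :
    (P.dIso fi Δ hΔ).hom.app ((P.pull f).obj W) =
      (P.ι B).hom.app ((P.pull f).obj W) ≫ (P.κ f (𝟙 B)).hom.app W ≫
        eqToHom (by rw [Category.id_comp, ← Category.assoc, hΔ, Category.id_comp]) ≫
        (P.pull₃Iso Δ fi f W).inv := by
  simp only [dIso, Iso.trans_hom, Iso.symm_hom, NatTrans.comp_app, eqToIso.hom, eqToHom_app]
  rw [P.κ_inv_app_pull Δ fi f W, P.κ_hom_app_congr rfl hΔ W]
  simp

lemma dIso_hom_app_comp_pull_map_chi1_hom_app (f : B ⟶ A) (f₁ f₂ : BAB ⟶ B)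
    (hf : f₁ ≫ f = f₂ ≫ f) (Δ : B ⟶ BAB) (hΔ₁ : Δ ≫ f₁ = 𝟙 B) (hΔ₂ : Δ ≫ f₂ = 𝟙 B) (W : E A) :
    (P.dIso f₁ Δ hΔ₁).hom.app ((P.pull f).obj W) ≫
        (P.pull Δ).map ((P.chi1 f f₁ f₂ hf).hom.app W) =
      (P.dIso f₂ Δ hΔ₂).hom.app ((P.pull f).obj W) := by
  rw [P.dIso_hom_app_pull f₁ Δ hΔ₁ f W, P.dIso_hom_app_pull f₂ Δ hΔ₂ f W,
    P.pull_map_chi1_hom_app f f₁ f₂ hf Δ W]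
  simp

lemma jIso_inv_app_comp_pull_map_chi1_hom_app_comp_jIso_hom_app (f : B ⟶ A)
    (f₁ f₂ : BAB ⟶ B) (hf : f₁ ≫ f = f₂ ≫ f) (π₁ π₂ π : Q₀ ⟶ BAB) (hππ : π₂ ≫ f₂ = π₁ ≫ f₁)
    (hπ₁ : π ≫ f₁ = π₂ ≫ f₁) (hπ₂ : π ≫ f₂ = π₁ ≫ f₂) (W : E A) :
    (P.jIso f₁ π π₂ hπ₁).inv.app ((P.pull f).obj W) ≫
        (P.pull π).map ((P.chi1 f f₁ f₂ hf).hom.app W) ≫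
        (P.jIso f₂ π π₁ hπ₂).hom.app ((P.pull f).obj W) =
      (P.pull π₂).map ((P.chi1 f f₁ f₂ hf).hom.app W) ≫
        ((P.κ f₂ π₂).hom ≫ eqToHom (by rw [hππ]) ≫ (P.κ f₁ π₁).inv).app ((P.pull f).obj W) ≫
        (P.pull π₁).map ((P.chi1 f f₁ f₂ hf).hom.app W) := by
  rw [P.jIso_inv_app_pull f₁ π π₂ hπ₁ f W, P.jIso_hom_app_pull f₂ π π₁ hπ₂ f W,
    NatTrans.comp_app, NatTrans.comp_app, eqToHom_app,
    P.κ_hom_comp_eqToHom_comp_κ_inv_app_pull π₂ π₁ f₂ f₁ f hππ W,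
    P.pull_map_chi1_hom_app f f₁ f₂ hf π W, P.pull_map_chi1_hom_app f f₁ f₂ hf π₂ W,
    P.pull_map_chi1_hom_app f f₁ f₂ hf π₁ W]
  simp

end Coherence

section Mates

variable {A₀ B₀ C₀ D₀ : C} {e : B₀ ⟶ A₀} {g : C₀ ⟶ B₀} {k : C₀ ⟶ D₀} {h : D₀ ⟶ A₀}
  (θ : P.pull e ⋙ P.pull g ⟶ P.pull h ⋙ P.pull k)

lemma homEquiv_mate_app (X : E B₀) :
    (P.adj k).homEquiv ((P.pull g).obj X) ((P.pull h).obj ((P.push e).obj X))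
        ((P.mate θ).app X) =
      (P.pull g).map ((P.adj e).unit.app X) ≫ θ.app ((P.push e).obj X) := by
  simp [mate, Adjunction.homEquiv_unit]

lemma homEquiv_twoMate_app (Z : E C₀) :
    (P.adj h).homEquiv ((P.push k).obj Z) ((P.push e).obj ((P.push g).obj Z))
        ((P.twoMate θ).app Z) =
      (P.push k).map ((P.adj g).unit.app Z) ≫ (P.mate θ).app ((P.push g).obj Z) := by
  simp [twoMate, Adjunction.homEquiv_unit]

lemma homEquiv_mate_app_comp_pull_map {X : E B₀} {V : E A₀} (v : X ⟶ (P.pull e).obj V) :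
    (P.adj k).homEquiv ((P.pull g).obj X) ((P.pull h).obj V)
        ((P.mate θ).app X ≫ (P.pull h).map ((P.push e).map v ≫ (P.adj e).counit.app V)) =
      (P.pull g).map v ≫ θ.app V := by
  rw [Adjunction.homEquiv_naturality_right]
  dsimp only [Functor.comp_obj]
  rw [homEquiv_mate_app, Category.assoc,
    ← Functor.comp_map, ← θ.naturality, Functor.comp_map, ← Functor.map_comp_assoc]
  simp

lemma homEquiv_twoMate_app_pull_comp_push_map_counit (Y : E B₀) :
    (P.adj h).homEquiv ((P.push k).obj ((P.pull g).obj Y)) ((P.push e).obj Y)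
        ((P.twoMate θ).app ((P.pull g).obj Y) ≫ (P.push e).map ((P.adj g).counit.app Y)) =
      (P.mate θ).app Y := by
  rw [Adjunction.homEquiv_naturality_right]
  dsimp only [Functor.comp_obj]
  rw [homEquiv_twoMate_app, Category.assoc,
    ← Functor.comp_map, ← (P.mate θ).naturality, Functor.comp_map, ← Functor.map_comp_assoc]
  simp

end Mates

lemma homEquiv_BC_app {A₀ B₀ C₀ D₀ : C} (a : A₀ ⟶ B₀) (c : A₀ ⟶ C₀) (d : B₀ ⟶ D₀)
    (b : C₀ ⟶ D₀) (sq : a ≫ d = c ≫ b) (X : E B₀) :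
    (P.adj c).homEquiv ((P.pull a).obj X) ((P.pull b).obj ((P.push d).obj X))
        ((P.BC a c d b sq).app X) =
      (P.pull a).map ((P.adj d).unit.app X) ≫
        ((P.κ d a).hom ≫ eqToHom (by rw [sq]) ≫ (P.κ b c).inv).app ((P.push d).obj X) :=
  P.homEquiv_mate_app _ X

section KernelPair

variable {A B BAB Q : C} (f : B ⟶ A) (f₁ f₂ : BAB ⟶ B) (hf : f₁ ≫ f = f₂ ≫ f)

lemma unit_comp_pull_map_BC_kernelPair_app (X : E B) :
    (P.adj f₂).unit.app ((P.pull f₁).obj X) ≫ (P.pull f₂).map ((P.BC f₁ f₂ f f hf).app X) =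
      (P.pull f₁).map ((P.adj f).unit.app X) ≫ (P.chi1 f f₁ f₂ hf).hom.app ((P.push f).obj X) :=
  (Adjunction.homEquiv_unit _ _ _ _).symm.trans (P.homEquiv_BC_app f₁ f₂ f f hf X)

lemma homEquiv_BC_kernelPair_app_comp_pull_map {X : E B} {V : E A} (v : X ⟶ (P.pull f).obj V) :
    (P.adj f₂).homEquiv ((P.pull f₁).obj X) ((P.pull f).obj V)
        ((P.BC f₁ f₂ f f hf).app X ≫ (P.pull f).map ((P.push f).map v ≫ (P.adj f).counit.app V)) =
      (P.pull f₁).map v ≫ (P.chi1 f f₁ f₂ hf).hom.app V :=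
  P.homEquiv_mate_app_comp_pull_map _ v

lemma eta'_comp_BC_app (Δ : B ⟶ BAB) (hΔ₁ : Δ ≫ f₁ = 𝟙 B) (hΔ₂ : Δ ≫ f₂ = 𝟙 B) (X : E B) :
    P.eta' f₁ f₂ Δ hΔ₁ hΔ₂ X ≫ (P.BC f₁ f₂ f f hf).app X = (P.adj f).unit.app X := by
  have hd₂ := (P.dIso f₂ Δ hΔ₂).inv.naturality ((P.BC f₁ f₂ f f hf).app X)
  have hd₁ := (P.dIso f₁ Δ hΔ₁).hom.naturality ((P.adj f).unit.app X)
  dsimp only [Functor.id_obj, Functor.id_map, Functor.comp_obj, Functor.comp_map] at hd₂ hd₁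
  rw [eta', Category.assoc, Category.assoc, ← hd₂, ← (P.pull Δ).map_comp_assoc,
    unit_comp_pull_map_BC_kernelPair_app, Functor.map_comp, Category.assoc, ← reassoc_of% hd₁,
    reassoc_of% P.dIso_hom_app_comp_pull_map_chi1_hom_app f f₁ f₂ hf Δ hΔ₁ hΔ₂,
    Iso.hom_inv_id_app]
  exact Category.comp_id _

variable (π₁ π₂ π : Q ⟶ BAB)

lemma homEquiv_homEquiv_kTwo_app_comp_BC_app (hπ₁ : π ≫ f₁ = π₂ ≫ f₁)
    (hπ₂ : π ≫ f₂ = π₁ ≫ f₂) (X : E B) :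
    (P.adj π₁).homEquiv ((P.pull π₂).obj ((P.pull f₁).obj X))
        ((P.pull f₂).obj ((P.pull f).obj ((P.push f).obj X)))
      ((P.adj f₂).homEquiv ((P.push π₁).obj ((P.pull π₂).obj ((P.pull f₁).obj X)))
        ((P.pull f).obj ((P.push f).obj X))
        ((P.push f₂).map ((P.push π₁).map ((P.jIso f₁ π π₂ hπ₁).inv.app X)) ≫
          (P.kTwo f₂ π π₁ hπ₂).app ((P.pull π).obj ((P.pull f₁).obj X)) ≫
          (P.push f₂).map ((P.adj π).counit.app ((P.pull f₁).obj X)) ≫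
          (P.BC f₁ f₂ f f hf).app X)) =
      (P.pull π₂).map ((P.pull f₁).map ((P.adj f).unit.app X)) ≫
        (P.jIso f₁ π π₂ hπ₁).inv.app ((P.pull f).obj ((P.push f).obj X)) ≫
        (P.pull π).map ((P.chi1 f f₁ f₂ hf).hom.app ((P.push f).obj X)) ≫
        (P.jIso f₂ π π₁ hπ₂).hom.app ((P.pull f).obj ((P.push f).obj X)) := by
  have hk : (P.adj f₂).homEquiv ((P.push π₁).obj ((P.pull π).obj ((P.pull f₁).obj X)))
      ((P.pull f).obj ((P.push f).obj X))
      ((P.kTwo f₂ π π₁ hπ₂).app ((P.pull π).obj ((P.pull f₁).obj X)) ≫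
        (P.push f₂).map ((P.adj π).counit.app ((P.pull f₁).obj X)) ≫
        (P.BC f₁ f₂ f f hf).app X) =
      (P.mate (P.jIso f₂ π π₁ hπ₂).hom).app ((P.pull f₁).obj X) ≫
        (P.pull f₂).map ((P.BC f₁ f₂ f f hf).app X) := by
    rw [← Category.assoc, Adjunction.homEquiv_naturality_right, kTwo]
    dsimp only [Functor.comp_obj, Functor.id_obj]
    rw [homEquiv_twoMate_app_pull_comp_push_map_counit]
  rw [Adjunction.homEquiv_naturality_left]
  dsimp only [Functor.comp_obj]
  rw [hk, Adjunction.homEquiv_naturality_left, Adjunction.homEquiv_naturality_right]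
  dsimp only [Functor.comp_obj]
  rw [homEquiv_mate_app, Category.assoc, ← Functor.comp_map,
    ← (P.jIso f₂ π π₁ hπ₂).hom.naturality, Functor.comp_map, ← (P.pull π).map_comp_assoc,
    unit_comp_pull_map_BC_kernelPair_app, Functor.map_comp, Category.assoc, ← Functor.comp_map,
    ← (P.jIso f₁ π π₂ hπ₁).inv.naturality_assoc]
  rfl

lemma homEquiv_homEquiv_push_map_BC_app_comp_BC_app (hππ : π₂ ≫ f₂ = π₁ ≫ f₁) (X : E B) :
    (P.adj π₁).homEquiv ((P.pull π₂).obj ((P.pull f₁).obj X))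
        ((P.pull f₂).obj ((P.pull f).obj ((P.push f).obj X)))
      ((P.adj f₂).homEquiv ((P.push π₁).obj ((P.pull π₂).obj ((P.pull f₁).obj X)))
        ((P.pull f).obj ((P.push f).obj X))
        ((P.push f₂).map ((P.BC π₂ π₁ f₂ f₁ hππ).app ((P.pull f₁).obj X)) ≫
          ((P.BC f₁ f₂ f f hf).app ((P.push f₂).obj ((P.pull f₁).obj X)) ≫
            (P.pull f).map ((P.push f).map ((P.BC f₁ f₂ f f hf).app X))) ≫ P.Tmul f X)) =
      (P.pull π₂).map ((P.pull f₁).map ((P.adj f).unit.app X)) ≫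
        (P.pull π₂).map ((P.chi1 f f₁ f₂ hf).hom.app ((P.push f).obj X)) ≫
        ((P.κ f₂ π₂).hom ≫ eqToHom (by rw [hππ]) ≫ (P.κ f₁ π₁).inv).app
          ((P.pull f).obj ((P.push f).obj X)) ≫
        (P.pull π₁).map ((P.chi1 f f₁ f₂ hf).hom.app ((P.push f).obj X)) := by
  rw [Adjunction.homEquiv_naturality_left, Tmul, Category.assoc, ← Functor.map_comp]
  dsimp only [Functor.comp_obj]
  rw [homEquiv_BC_kernelPair_app_comp_pull_map, Adjunction.homEquiv_naturality_right]
  dsimp only [Functor.comp_obj]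
  rw [homEquiv_BC_app]
  simp only [Functor.map_comp, Category.assoc]
  rw [← Functor.comp_map (P.pull f₁) (P.pull π₁), ← NatTrans.naturality_assoc, Functor.comp_map,
    ← (P.pull π₂).map_comp_assoc, unit_comp_pull_map_BC_kernelPair_app, Functor.map_comp,
    Category.assoc]

lemma mu'_comp_BC_app (hππ : π₂ ≫ f₂ = π₁ ≫ f₁) (hπ₁ : π ≫ f₁ = π₂ ≫ f₁)
    (hπ₂ : π ≫ f₂ = π₁ ≫ f₂) [hiso : IsIso (P.BC π₂ π₁ f₂ f₁ hππ)] (X : E B) :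
    P.mu' f₁ f₂ π₁ π₂ π hππ hπ₁ hπ₂ hiso X ≫ (P.BC f₁ f₂ f f hf).app X =
      ((P.BC f₁ f₂ f f hf).app ((P.push f₂).obj ((P.pull f₁).obj X)) ≫
        (P.pull f).map ((P.push f).map ((P.BC f₁ f₂ f f hf).app X))) ≫ P.Tmul f X := by
  rw [mu', BCinv, NatIso.isIso_inv_app, Functor.map_inv, Category.assoc, Category.assoc,
    Category.assoc, IsIso.inv_comp_eq]
  apply ((P.adj f₂).homEquiv _ _).injective
  apply ((P.adj π₁).homEquiv _ _).injective
  dsimp only [Functor.comp_obj]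
  rw [homEquiv_homEquiv_kTwo_app_comp_BC_app, homEquiv_homEquiv_push_map_BC_app_comp_BC_app,
    jIso_inv_app_comp_pull_map_chi1_hom_app_comp_jIso_hom_app (hππ := hππ)]

end KernelPair

end BRPaper.ClovenBifib

open BRPaper ClovenBifib CategoryTheory

theorem benabou_roubaud_monad_iso_general
    {C : Type u} [Category.{v} C]
    {E : C → Type u'} [∀ A, Category.{v'} (E A)] (P : ClovenBifib C E)
    (hBC : P.BCCond)
    {A B : C} (f : B ⟶ A) {BAB : C} (f₁ f₂ : BAB ⟶ B)
    (hf : f₁ ≫ f = f₂ ≫ f) (hkp : IsPullback f₁ f₂ f f)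
    (Δ : B ⟶ BAB) (hΔ₁ : Δ ≫ f₁ = 𝟙 B) (hΔ₂ : Δ ≫ f₂ = 𝟙 B)
    {Q : C} (π₁ π₂ : Q ⟶ BAB) (hππ : π₂ ≫ f₂ = π₁ ≫ f₁) (hpbQ : IsPullback π₂ π₁ f₂ f₁)
    (π : Q ⟶ BAB) (hπ₁ : π ≫ f₁ = π₂ ≫ f₁) (hπ₂ : π ≫ f₂ = π₁ ≫ f₂) :
    -- left unit law: μ'_X ∘ η'_{T' X} = id
    (∀ X : E B,
      P.eta' f₁ f₂ Δ hΔ₁ hΔ₂ ((P.push f₂).obj ((P.pull f₁).obj X)) ≫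
        P.mu' f₁ f₂ π₁ π₂ π hππ hπ₁ hπ₂ (hBC π₂ π₁ f₂ f₁ hππ hpbQ) X = 𝟙 _) ∧
    -- right unit law: μ'_X ∘ T'(η'_X) = id
    (∀ X : E B,
      (P.push f₂).map ((P.pull f₁).map (P.eta' f₁ f₂ Δ hΔ₁ hΔ₂ X)) ≫
        P.mu' f₁ f₂ π₁ π₂ π hππ hπ₁ hπ₂ (hBC π₂ π₁ f₂ f₁ hππ hpbQ) X = 𝟙 _) ∧
    -- associativity: μ'_X ∘ T'(μ'_X) = μ'_X ∘ μ'_{T' X}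
    (∀ X : E B,
      (P.push f₂).map ((P.pull f₁).map
          (P.mu' f₁ f₂ π₁ π₂ π hππ hπ₁ hπ₂ (hBC π₂ π₁ f₂ f₁ hππ hpbQ) X)) ≫
        P.mu' f₁ f₂ π₁ π₂ π hππ hπ₁ hπ₂ (hBC π₂ π₁ f₂ f₁ hππ hpbQ) X =
      P.mu' f₁ f₂ π₁ π₂ π hππ hπ₁ hπ₂ (hBC π₂ π₁ f₂ f₁ hππ hpbQ)
          ((P.push f₂).obj ((P.pull f₁).obj X)) ≫
        P.mu' f₁ f₂ π₁ π₂ π hππ hπ₁ hπ₂ (hBC π₂ π₁ f₂ f₁ hππ hpbQ) X) ∧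
    -- BC₁ ∘ η′ = η_f
    (∀ X : E B,
      P.eta' f₁ f₂ Δ hΔ₁ hΔ₂ X ≫ (P.BC f₁ f₂ f f hf).app X =
        (P.adj f).unit.app X) ∧
    -- BC₁ ∘ μ′ = μ ∘ (BC₁ ∗ BC₁)
    (∀ X : E B,
      P.mu' f₁ f₂ π₁ π₂ π hππ hπ₁ hπ₂ (hBC π₂ π₁ f₂ f₁ hππ hpbQ) X ≫
          (P.BC f₁ f₂ f f hf).app X =
        ((P.BC f₁ f₂ f f hf).app ((P.push f₂).obj ((P.pull f₁).obj X)) ≫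
          (P.pull f).map ((P.push f).map ((P.BC f₁ f₂ f f hf).app X))) ≫
          P.Tmul f X) := by
  have hη := P.eta'_comp_BC_app f f₁ f₂ hf Δ hΔ₁ hΔ₂
  have hμ := P.mu'_comp_BC_app f f₁ f₂ hf π₁ π₂ π hππ hπ₁ hπ₂ (hiso := hBC π₂ π₁ f₂ f₁ hππ hpbQ)
  obtain ⟨left_unit, right_unit, assoc⟩ :=
    (P.adj f).toMonad.laws_of_isIso (P.BC f₁ f₂ f f hf) (hφ := hBC f₁ f₂ f f hf hkp) _ _ hη hμ
  exact ⟨left_unit, right_unit, assoc, hη, hμ⟩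

/-- Assume the Beck–Chevalley property. Then
`((f₂)_! ∘ f₁^*, η′, μ′)` is a monad on `ℰ_B` (two unit laws and associativity),
and `BC₁` is an isomorphism of monads to `T_f`: `BC₁ ∘ η′ = η_f` and
`BC₁ ∘ μ′ = μ ∘ (BC₁ ∗ BC₁)` (componentwise). -/
theorem benabou_roubaud_monad_iso
    {C : Type u} [Category.{v} C] [Limits.HasPullbacks C]
    {E : C → Type u'} [∀ A, Category.{v'} (E A)] (P : ClovenBifib C E)
    (hBC : P.BCCond)
    {A B : C} (f : B ⟶ A) {BAB : C} (f₁ f₂ : BAB ⟶ B)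
    (hf : f₁ ≫ f = f₂ ≫ f) (hkp : IsPullback f₁ f₂ f f)
    (Δ : B ⟶ BAB) (hΔ₁ : Δ ≫ f₁ = 𝟙 B) (hΔ₂ : Δ ≫ f₂ = 𝟙 B)
    {Q : C} (π₁ π₂ : Q ⟶ BAB) (hππ : π₂ ≫ f₂ = π₁ ≫ f₁) (hpbQ : IsPullback π₂ π₁ f₂ f₁)
    (π : Q ⟶ BAB) (hπ₁ : π ≫ f₁ = π₂ ≫ f₁) (hπ₂ : π ≫ f₂ = π₁ ≫ f₂) :
    -- left unit law: μ'_X ∘ η'_{T' X} = id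
    (∀ X : E B,
      P.eta' f₁ f₂ Δ hΔ₁ hΔ₂ ((P.push f₂).obj ((P.pull f₁).obj X)) ≫
        P.mu' f₁ f₂ π₁ π₂ π hππ hπ₁ hπ₂ (hBC π₂ π₁ f₂ f₁ hππ hpbQ) X = 𝟙 _) ∧
    -- right unit law: μ'_X ∘ T'(η'_X) = id
    (∀ X : E B,
      (P.push f₂).map ((P.pull f₁).map (P.eta' f₁ f₂ Δ hΔ₁ hΔ₂ X)) ≫
        P.mu' f₁ f₂ π₁ π₂ π hππ hπ₁ hπ₂ (hBC π₂ π₁ f₂ f₁ hππ hpbQ) X = 𝟙 _) ∧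
    -- associativity: μ'_X ∘ T'(μ'_X) = μ'_X ∘ μ'_{T' X}
    (∀ X : E B,
      (P.push f₂).map ((P.pull f₁).map
          (P.mu' f₁ f₂ π₁ π₂ π hππ hπ₁ hπ₂ (hBC π₂ π₁ f₂ f₁ hππ hpbQ) X)) ≫
        P.mu' f₁ f₂ π₁ π₂ π hππ hπ₁ hπ₂ (hBC π₂ π₁ f₂ f₁ hππ hpbQ) X =
      P.mu' f₁ f₂ π₁ π₂ π hππ hπ₁ hπ₂ (hBC π₂ π₁ f₂ f₁ hππ hpbQ)
          ((P.push f₂).obj ((P.pull f₁).obj X)) ≫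
        P.mu' f₁ f₂ π₁ π₂ π hππ hπ₁ hπ₂ (hBC π₂ π₁ f₂ f₁ hππ hpbQ) X) ∧
    -- BC₁ ∘ η′ = η_f
    (∀ X : E B,
      P.eta' f₁ f₂ Δ hΔ₁ hΔ₂ X ≫ (P.BC f₁ f₂ f f hf).app X =
        (P.adj f).unit.app X) ∧
    -- BC₁ ∘ μ′ = μ ∘ (BC₁ ∗ BC₁)
    (∀ X : E B,
      P.mu' f₁ f₂ π₁ π₂ π hππ hπ₁ hπ₂ (hBC π₂ π₁ f₂ f₁ hππ hpbQ) X ≫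
          (P.BC f₁ f₂ f f hf).app X =
        ((P.BC f₁ f₂ f f hf).app ((P.push f₂).obj ((P.pull f₁).obj X)) ≫
          (P.pull f).map ((P.push f).map ((P.BC f₁ f₂ f f hf).app X))) ≫
          P.Tmul f X) :=
  benabou_roubaud_monad_iso_general P hBC f f₁ f₂ hf hkp Δ hΔ₁ hΔ₂ π₁ π₂ hππ hpbQ π hπ₁ hπ₂
end

section
/- (Round trip on algebras) Assume the Beck–Chevalley property. Let (X, α) be a T_f-algebra, let φ := f₂^*(α) ∘ (χ₁)_{f_! X} ∘ f₁^*((η_f)_X) : f₁^* X ⟶ f₂^* X and let β := (ε_{f₂})_X ∘ (f₂)_!(φ) : (f₂)_!(f₁^* X) ⟶ X. Then β ∘ (BC₁⁻¹)_X = α. -/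
open CategoryTheory

universe v' u' v u

/-!
`BC₁` is the mate of `χ₁`, so naturality of the counit of `(f₂)_! ⊣ f₂^*` gives
`α ∘ BC₁ = (ε_{f₂})_X ∘ (f₂)_!(f₂^*(α) ∘ χ₁ ∘ f₁^*(η_f)) = β` for any `α : f^* f_! X ⟶ X`;
inverting `BC₁` gives the claim.
-/

namespace BRPaper.ClovenBifib

variable {C : Type u} [Category.{v} C] {E : C → Type u'} [∀ A, Category.{v'} (E A)]
  (P : ClovenBifib C E)

theorem mate_app_comp {A₀ B₀ C₀ D₀ : C} {e : B₀ ⟶ A₀} {g : C₀ ⟶ B₀} {k : C₀ ⟶ D₀}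
    {h : D₀ ⟶ A₀} (θ : P.pull e ⋙ P.pull g ⟶ P.pull h ⋙ P.pull k) (X : E B₀) {Y : E D₀}
    (α : (P.pull h).obj ((P.push e).obj X) ⟶ Y) :
    (P.mate θ).app X ≫ α =
      (P.push k).map ((P.pull g).map ((P.adj e).unit.app X) ≫ θ.app ((P.push e).obj X) ≫
        (P.pull k).map α) ≫ (P.adj k).counit.app Y := by
  simp only [mate, NatTrans.comp_app, Functor.whiskerRight_app, Functor.whiskerLeft_app,
    Functor.comp_map, Functor.map_comp, Category.assoc]
  rw [(P.adj k).counit_naturality α]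
  rfl

theorem BC_eq_mate_chi1 {A B BAB : C} (f : B ⟶ A) (f₁ f₂ : BAB ⟶ B) (hf : f₁ ≫ f = f₂ ≫ f) :
    P.BC f₁ f₂ f f hf = P.mate (P.chi1 f f₁ f₂ hf).hom :=
  rfl

theorem BC_app_comp_eq_betaMap_phi {A B BAB : C} (f : B ⟶ A) (f₁ f₂ : BAB ⟶ B)
    (hf : f₁ ≫ f = f₂ ≫ f) (X : E B) (α : (P.pull f).obj ((P.push f).obj X) ⟶ X) :
    (P.BC f₁ f₂ f f hf).app X ≫ α = P.betaMap f₁ f₂ X (P.phi f f₁ f₂ hf X α) := by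
  rw [BC_eq_mate_chi1, mate_app_comp]
  rfl

end BRPaper.ClovenBifib

open BRPaper ClovenBifib CategoryTheory

theorem benabou_roubaud_round_trip_algebras_general
    {C : Type u} [Category.{v} C]
    {E : C → Type u'} [∀ A, Category.{v'} (E A)] (P : ClovenBifib C E)
    (hBC : P.BCCond)
    {A B : C} (f : B ⟶ A) {BAB : C} (f₁ f₂ : BAB ⟶ B)
    (hf : f₁ ≫ f = f₂ ≫ f) (hkp : IsPullback f₁ f₂ f f)
    (X : E B) (α : (P.pull f).obj ((P.push f).obj X) ⟶ X) :
    (P.BCinv f₁ f₂ f f hf (hBC f₁ f₂ f f hf hkp)).app X ≫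
        P.betaMap f₁ f₂ X (P.phi f f₁ f₂ hf X α) = α := by
  have hBC₁ : IsIso (P.BC f₁ f₂ f f hf) := hBC f₁ f₂ f f hf hkp
  rw [← BC_app_comp_eq_betaMap_phi, BCinv, ← NatTrans.comp_app_assoc, IsIso.inv_hom_id,
    NatTrans.id_app, Category.id_comp]

/-- **round trip on algebras.** Assume the Beck–Chevalley property.
For a `T_f`-algebra `(X, α)`, with `φ` the induced descent datum and
`β := (ε_{f₂})_X ∘ (f₂)_!(φ)`, we have `β ∘ (BC₁⁻¹)_X = α`. -/
theorem benabou_roubaud_round_trip_algebras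
    {C : Type u} [Category.{v} C] [Limits.HasPullbacks C]
    {E : C → Type u'} [∀ A, Category.{v'} (E A)] (P : ClovenBifib C E)
    (hBC : P.BCCond)
    {A B : C} (f : B ⟶ A) {BAB : C} (f₁ f₂ : BAB ⟶ B)
    (hf : f₁ ≫ f = f₂ ≫ f) (hkp : IsPullback f₁ f₂ f f)
    (X : E B) (α : (P.pull f).obj ((P.push f).obj X) ⟶ X)
    (hTA1 : (P.adj f).unit.app X ≫ α = 𝟙 X)
    (hTA2 : P.Tmul f X ≫ α = (P.pull f).map ((P.push f).map α) ≫ α) :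
    (P.BCinv f₁ f₂ f f hf (hBC f₁ f₂ f f hf hkp)).app X ≫
        P.betaMap f₁ f₂ X (P.phi f f₁ f₂ hf X α) = α :=
  benabou_roubaud_round_trip_algebras_general P hBC f f₁ f₂ hf hkp X α
end

section
/- (Round trip on descent data) Assume the Beck–Chevalley property. Let (X, φ) be an object of Desc_p(f), let β := (ε_{f₂})_X ∘ (f₂)_!(φ) : (f₂)_!(f₁^* X) ⟶ X and let α := β ∘ (BC₁⁻¹)_X : f^*(f_! X) ⟶ X. Then f₂^*(α) ∘ (χ₁)_{f_! X} ∘ f₁^*((η_f)_X) = φ. -/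
open CategoryTheory

universe v' u' v u

open BRPaper ClovenBifib CategoryTheory

/-!
The round trip is formal. Being a mate, the Beck–Chevalley map of the kernel-pair square satisfies
`f₂^*(BC₁) ∘ η_{f₂} = χ₁ ∘ f₁^*(η_f)`, so after cancelling `BC₁` against `BC₁⁻¹` the left-hand
side becomes `f₂^*(β) ∘ η_{f₂}`, the adjoint transpose of `β = ε_{f₂} ∘ (f₂)_!(φ)`, which is `φ`.
-/

namespace BRPaper.ClovenBifib

variable {C : Type u} [Category.{v} C] {E : C → Type u'} [∀ A, Category.{v'} (E A)]
  (P : ClovenBifib C E)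

theorem unit_comp_pull_map_mate {A₀ B₀ C₀ D₀ : C} {e : B₀ ⟶ A₀} {g : C₀ ⟶ B₀} {k : C₀ ⟶ D₀}
    {h : D₀ ⟶ A₀} (θ : P.pull e ⋙ P.pull g ⟶ P.pull h ⋙ P.pull k) (Y : E B₀) :
    (P.adj k).unit.app ((P.pull g).obj Y) ≫ (P.pull k).map ((P.mate θ).app Y) =
      (P.pull g).map ((P.adj e).unit.app Y) ≫ θ.app ((P.push e).obj Y) := by
  rw [unit_mateEquiv_symm (P.adj e) (P.adj k) (.mk _ _ _ _ θ)]
  congr 3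
  ext
  simp [mate]

section Square

variable {A₀ B₀ C₀ D₀ : C} (a : A₀ ⟶ B₀) (c : A₀ ⟶ C₀) (d : B₀ ⟶ D₀) (b : C₀ ⟶ D₀)
  (sq : a ≫ d = c ≫ b)

theorem unit_comp_pull_map_BC (Y : E B₀) :
    (P.adj c).unit.app ((P.pull a).obj Y) ≫ (P.pull c).map ((P.BC a c d b sq).app Y) =
      (P.pull a).map ((P.adj d).unit.app Y) ≫
        ((P.κ d a).hom ≫ eqToHom (by rw [sq]) ≫ (P.κ b c).inv).app ((P.push d).obj Y) :=
  P.unit_comp_pull_map_mate _ Y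

theorem pull_map_unit_comp_pull_map_BCinv_comp (hiso : IsIso (P.BC a c d b sq))
    (Y : E B₀) {Z : E C₀} (β : (P.push c).obj ((P.pull a).obj Y) ⟶ Z) :
    (P.pull a).map ((P.adj d).unit.app Y) ≫
        ((P.κ d a).hom ≫ eqToHom (by rw [sq]) ≫ (P.κ b c).inv).app ((P.push d).obj Y) ≫
        (P.pull c).map ((P.BCinv a c d b sq hiso).app Y ≫ β) =
      (P.adj c).homEquiv _ _ β := by
  have hcancel : (P.BC a c d b sq).app Y ≫ (P.BCinv a c d b sq hiso).app Y = 𝟙 _ := by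
    rw [BCinv, ← NatTrans.comp_app, IsIso.hom_inv_id, NatTrans.id_app]
  calc _ = ((P.adj c).unit.app _ ≫ (P.pull c).map ((P.BC a c d b sq).app Y)) ≫
        (P.pull c).map ((P.BCinv a c d b sq hiso).app Y ≫ β) := by
        rw [P.unit_comp_pull_map_BC, Category.assoc]
    _ = _ := by
      rw [Category.assoc, ← Functor.map_comp, reassoc_of% hcancel, Adjunction.homEquiv_unit]

end Square

end BRPaper.ClovenBifib

theorem benabou_roubaud_round_trip_descent_general
    {C : Type u} [Category.{v} C]
    {E : C → Type u'} [∀ A, Category.{v'} (E A)] (P : ClovenBifib C E)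
    (hBC : P.BCCond)
    {A B : C} (f : B ⟶ A) {BAB : C} (f₁ f₂ : BAB ⟶ B)
    (hf : f₁ ≫ f = f₂ ≫ f) (hkp : IsPullback f₁ f₂ f f)
    (X : E B) (φ : (P.pull f₁).obj X ≅ (P.pull f₂).obj X) :
    P.phi f f₁ f₂ hf X
        ((P.BCinv f₁ f₂ f f hf (hBC f₁ f₂ f f hf hkp)).app X ≫
          P.betaMap f₁ f₂ X φ.hom) = φ.hom := by
  calc P.phi f f₁ f₂ hf X _ = (P.adj f₂).homEquiv _ _ (P.betaMap f₁ f₂ X φ.hom) :=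
        P.pull_map_unit_comp_pull_map_BCinv_comp f₁ f₂ f f hf _ X _
    _ = φ.hom := by
      rw [betaMap, ← Adjunction.homEquiv_counit, Equiv.apply_symm_apply]

/-- **round trip on descent data.** Assume the Beck–Chevalley
property. For `(X, φ)` in `Desc_p(f)`, with `β := (ε_{f₂})_X ∘ (f₂)_!(φ)` and
`α := β ∘ (BC₁⁻¹)_X`, we have `f₂^*(α) ∘ (χ₁)_{f_! X} ∘ f₁^*((η_f)_X) = φ`. -/
theorem benabou_roubaud_round_trip_descent
    {C : Type u} [Category.{v} C] [Limits.HasPullbacks C]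
    {E : C → Type u'} [∀ A, Category.{v'} (E A)] (P : ClovenBifib C E)
    (hBC : P.BCCond)
    {A B : C} (f : B ⟶ A) {BAB : C} (f₁ f₂ : BAB ⟶ B)
    (hf : f₁ ≫ f = f₂ ≫ f) (hkp : IsPullback f₁ f₂ f f)
    (Δ : B ⟶ BAB) (hΔ₁ : Δ ≫ f₁ = 𝟙 B) (hΔ₂ : Δ ≫ f₂ = 𝟙 B)
    {Q : C} (π₁ π₂ : Q ⟶ BAB) (hππ : π₂ ≫ f₂ = π₁ ≫ f₁) (hpbQ : IsPullback π₂ π₁ f₂ f₁)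
    (π : Q ⟶ BAB) (hπ₁ : π ≫ f₁ = π₂ ≫ f₁) (hπ₂ : π ≫ f₂ = π₁ ≫ f₂)
    (X : E B) (φ : (P.pull f₁).obj X ≅ (P.pull f₂).obj X)
    (hDD1 : (P.dIso f₁ Δ hΔ₁).hom.app X ≫ (P.pull Δ).map φ.hom =
      (P.dIso f₂ Δ hΔ₂).hom.app X)
    (hDD2 : (P.pull π₂).map φ.hom ≫ (P.jCross f₁ f₂ π₁ π₂ hππ).hom.app X ≫
        (P.pull π₁).map φ.hom =
      (P.jIso f₁ π π₂ hπ₁).inv.app X ≫ (P.pull π).map φ.hom ≫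
        (P.jIso f₂ π π₁ hπ₂).hom.app X) :
    P.phi f f₁ f₂ hf X
        ((P.BCinv f₁ f₂ f f hf (hBC f₁ f₂ f f hf hkp)).app X ≫
          P.betaMap f₁ f₂ X φ.hom) = φ.hom :=
  benabou_roubaud_round_trip_descent_general P hBC f f₁ f₂ hf hkp X φ
end
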